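/- Conjugation identity for noncommutative Q-shifted factorials (Lemma 5 of the paper): Let A and C be elements of a unit ring R, let Q be an element of R commuting with both A and C, and let n be a positive integer. Then C^{−1}A(I−A)^{−1}(I−A^{−1}CQ^{n−1}) · ⌈A^{−1}C; CQ; Q, I⌋_{n−1} · (I−C)^{−1}(I−A)A^{−1}C = ⌈A^{−1}C; C; Q, I⌋_n, where ⌈A^{−1}C; C; Q, I⌋_n = ∏_{j=1}^{n} (I−CQ^{n−j})^{−1}(I−A^{−1}CQ^{n−j}) (ordered product, left to right in increasing j). -/
import Mathlib


/-- Ordered (noncommutative) product `f 0 * f 1 * ⋯ * f (n-1)`. -/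
def opr {R : Type*} [Ring R] (n : ℕ) (f : ℕ → R) : R :=
  ((List.range n).map f).prod

section Aux

variable {R : Type*} [Ring R]

lemma opr_zero (f : ℕ → R) : opr 0 f = 1 := rfl

lemma opr_succ (k : ℕ) (f : ℕ → R) : opr (k + 1) f = opr k f * f k := by
  simp [opr, List.range_succ]

lemma opr_congr (k : ℕ) (f g : ℕ → R) (h : ∀ j < k, f j = g j) :
    opr k f = opr k g := by
  unfold opr
  rw [List.map_congr_left (fun x hx => h x (List.mem_range.mp hx))]

lemma comm_inverse {u a : R} (hu : IsUnit u) (h : a * u = u * a) :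
    a * Ring.inverse u = Ring.inverse u * a := by
  obtain ⟨v, rfl⟩ := hu
  rw [Ring.inverse_unit]
  exact Commute.units_inv_right h

lemma opr_shift (k : ℕ) (p s : ℕ → R) :
    p 0 * opr k (fun j => s j * p (j + 1)) = opr k (fun j => p j * s j) * p k := by
  induction k with
  | zero => simp [opr]
  | succ k ih =>
    simp only [opr_succ]
    rw [← mul_assoc, ih]
    noncomm_ring

lemma opr_conj (k : ℕ) (Z Y : ℕ → R) (T Ti : R) (h1 : Ti * T = 1) (h2 : T * Ti = 1)
    (h : ∀ j < k, Z j * T = T * Y j) : Ti * opr k Z * T = opr k Y := by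
  induction k with
  | zero => simp [opr, h1]
  | succ k ih =>
    have hk := h k (by omega)
    calc Ti * opr (k + 1) Z * T
        = Ti * (opr k Z * Z k) * T := by rw [opr_succ]
      _ = (Ti * opr k Z) * ((T * Ti) * (Z k * T)) := by rw [h2, one_mul]; noncomm_ring
      _ = (Ti * opr k Z * T) * (Ti * (Z k * T)) := by noncomm_ring
      _ = opr k Y * (Ti * (T * Y k)) := by rw [ih (fun j hj => h j (by omega)), hk]
      _ = opr k Y * Y k := by rw [← mul_assoc Ti T, h1, one_mul]
      _ = opr (k + 1) Y := (opr_succ k Y).symm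

end Aux

/-- Conjugation identity for noncommutative Q-shifted factorials
(Lemma 5 of the paper):
`C⁻¹A(I−A)⁻¹(I−A⁻¹CQ^{n−1}) ⌈A⁻¹C; CQ; Q, I⌋_{n−1} (I−C)⁻¹(I−A)A⁻¹C
  = ⌈A⁻¹C; C; Q, I⌋_n`. -/
theorem conjugationQFactorial {R : Type*} [Ring R] (A C Q : R) (n : ℕ)
    (hn : 0 < n)
    (hQA : Q * A = A * Q) (hQC : Q * C = C * Q)
    (hA : IsUnit A) (hC : IsUnit C)
    (h1A : IsUnit (1 - A)) (h1C : IsUnit (1 - C))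
    (hCm : ∀ m : ℕ, m < n → IsUnit (1 - C * Q ^ m)) :
    Ring.inverse C * A * Ring.inverse (1 - A) *
        (1 - Ring.inverse A * C * Q ^ (n - 1)) *
      opr (n - 1) (fun j =>
        Ring.inverse (1 - C * Q * Q ^ (n - 2 - j)) *
          (1 - Ring.inverse A * C * Q ^ (n - 2 - j))) *
      (Ring.inverse (1 - C) * (1 - A) * Ring.inverse A * C) =
    opr n (fun j =>
      Ring.inverse (1 - C * Q ^ (n - 1 - j)) *
        (1 - Ring.inverse A * C * Q ^ (n - 1 - j))) := by
  obtain ⟨N, rfl⟩ : ∃ N, n = N + 1 := ⟨n - 1, (Nat.succ_pred_eq_of_pos hn).symm⟩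
  simp only [Nat.add_sub_cancel]
  set iA := Ring.inverse A with hiA
  set iC := Ring.inverse C with hiC
  set iA1 := Ring.inverse (1 - A) with hiA1
  set iC1 := Ring.inverse (1 - C) with hiC1
  set B := iA * C with hB
  set Ti := iC * A * iA1 with hTi
  set T := B - C with hT
  -- basic unit facts
  have F1 : A * iA = 1 := Ring.mul_inverse_cancel A hA
  have F2 : iA * A = 1 := Ring.inverse_mul_cancel A hA
  have F3 : C * iC = 1 := Ring.mul_inverse_cancel C hC
  have F4 : iC * C = 1 := Ring.inverse_mul_cancel C hC
  have F5 : (1 - A) * iA1 = 1 := Ring.mul_inverse_cancel _ h1A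
  -- commutation facts
  have cAiA1 : A * iA1 = iA1 * A := comm_inverse h1A (by noncomm_ring)
  have c1AiA : (1 - A) * iA = iA * (1 - A) := comm_inverse hA (by noncomm_ring)
  have ciAiA1 : iA * iA1 = iA1 * iA := comm_inverse h1A c1AiA.symm
  have key1 : iA1 - A * iA1 = 1 := by
    calc iA1 - A * iA1 = (1 - A) * iA1 := by noncomm_ring
      _ = 1 := F5
  have e1 : A * iA1 * iA = iA1 := by
    rw [cAiA1, mul_assoc, F1, mul_one]
  -- commutation with Q
  have cQiA : Q * iA = iA * Q := comm_inverse hA hQA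
  have cQiC : Q * iC = iC * Q := comm_inverse hC hQC
  have cQ1A : Q * (1 - A) = (1 - A) * Q := by rw [mul_sub, sub_mul, mul_one, one_mul, hQA]
  have cQiA1 : Q * iA1 = iA1 * Q := comm_inverse h1A cQ1A
  have cQB : Commute Q B := Commute.mul_right (cQiA : Commute Q iA) (hQC : Commute Q C)
  have cQTi : Commute Q Ti :=
    Commute.mul_right (Commute.mul_right (cQiC : Commute Q iC) (hQA : Commute Q A))
      (cQiA1 : Commute Q iA1)
  -- T and Ti are mutually inverse
  have hTin : Ti * T = 1 := by
    calc Ti * T = iC * ((A * iA1 * iA) * C) - iC * ((A * iA1) * C) := by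
          rw [hTi, hT, hB]; noncomm_ring
      _ = iC * ((iA1 - A * iA1) * C) := by rw [e1]; noncomm_ring
      _ = iC * C := by rw [key1, one_mul]
      _ = 1 := F4
  have hTni : T * Ti = 1 := by
    calc T * Ti = iA * (C * iC) * A * iA1 - C * iC * (A * iA1) := by
          rw [hTi, hT, hB]; noncomm_ring
      _ = iA1 - A * iA1 := by rw [F3, mul_one, F2]; simp only [one_mul]
      _ = 1 := key1
  -- computations of products with Ti
  have gBTi : B * Ti = iA1 := by
    calc B * Ti = iA * (C * iC) * A * iA1 := by rw [hTi, hB]; noncomm_ring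
      _ = iA1 := by rw [F3, mul_one, F2, one_mul]
  have gCTi : C * Ti = A * iA1 := by
    calc C * Ti = (C * iC) * (A * iA1) := by rw [hTi]; noncomm_ring
      _ = A * iA1 := by rw [F3, one_mul]
  have gTiB : Ti * B = iC * (iA1 * C) := by
    calc Ti * B = iC * ((A * iA1 * iA) * C) := by rw [hTi, hB]; noncomm_ring
      _ = iC * (iA1 * C) := by rw [e1]
  have h2' : iC * (iA1 * C) - iC * A * iA1 * C = 1 := by
    calc iC * (iA1 * C) - iC * A * iA1 * C = iC * ((iA1 - A * iA1) * C) := by noncomm_ring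
      _ = iC * C := by rw [key1, one_mul]
      _ = 1 := F4
  have K1 : C * Ti * B = B * Ti * C := by
    rw [gCTi, gBTi, hB]
    calc A * iA1 * (iA * C) = (A * iA1 * iA) * C := by noncomm_ring
      _ = iA1 * C := by rw [e1]
  have K2 : Ti * B + C * Ti = B * Ti + Ti * C := by
    rw [gTiB, gCTi, gBTi, hTi]
    calc iC * (iA1 * C) + A * iA1
        = (iC * (iA1 * C) - iC * A * iA1 * C) + (iC * A * iA1 * C + A * iA1) := by noncomm_ring
      _ = (iA1 - A * iA1) + (iC * A * iA1 * C + A * iA1) := by rw [h2', key1]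
      _ = iA1 + iC * A * iA1 * C := by noncomm_ring
  -- the core intertwining identity
  have core : ∀ m : ℕ, (1 - C * Q ^ m) * (Ti * (1 - B * Q ^ m)) =
      (1 - B * Q ^ m) * (Ti * (1 - C * Q ^ m)) := by
    intro m
    have hqB : Q ^ m * B = B * Q ^ m := Commute.pow_left cQB m
    have hqC : Q ^ m * C = C * Q ^ m := Commute.pow_left hQC m
    have hqTi : Q ^ m * Ti = Ti * Q ^ m := Commute.pow_left cQTi m
    set q := Q ^ m with hq
    have eL : (1 - C * q) * (Ti * (1 - B * q)) =
        (Ti - (Ti * B + C * Ti) * q) + (C * Ti * B) * (q * q) := by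
      calc (1 - C * q) * (Ti * (1 - B * q))
          = Ti - Ti * B * q - C * (q * Ti) + C * ((q * Ti) * (B * q)) := by noncomm_ring
        _ = Ti - Ti * B * q - C * (Ti * q) + C * ((Ti * q) * (B * q)) := by rw [hqTi]
        _ = Ti - Ti * B * q - C * Ti * q + C * Ti * ((q * B) * q) := by noncomm_ring
        _ = Ti - Ti * B * q - C * Ti * q + C * Ti * ((B * q) * q) := by rw [hqB]
        _ = (Ti - (Ti * B + C * Ti) * q) + (C * Ti * B) * (q * q) := by noncomm_ring
    have eR : (1 - B * q) * (Ti * (1 - C * q)) =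
        (Ti - (B * Ti + Ti * C) * q) + (B * Ti * C) * (q * q) := by
      calc (1 - B * q) * (Ti * (1 - C * q))
          = Ti - Ti * C * q - B * (q * Ti) + B * ((q * Ti) * (C * q)) := by noncomm_ring
        _ = Ti - Ti * C * q - B * (Ti * q) + B * ((Ti * q) * (C * q)) := by rw [hqTi]
        _ = Ti - Ti * C * q - B * Ti * q + B * Ti * ((q * C) * q) := by noncomm_ring
        _ = Ti - Ti * C * q - B * Ti * q + B * Ti * ((C * q) * q) := by rw [hqC]
        _ = (Ti - (B * Ti + Ti * C) * q) + (B * Ti * C) * (q * q) := by noncomm_ring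
    rw [eL, eR, K1, K2]
  -- per-factor intertwining
  have tw : ∀ m : ℕ, IsUnit (1 - C * Q ^ m) →
      (1 - B * Q ^ m) * Ring.inverse (1 - C * Q ^ m) * T =
        T * (Ring.inverse (1 - C * Q ^ m) * (1 - B * Q ^ m)) := by
    intro m hu
    set X := 1 - C * Q ^ m with hX
    set iX := Ring.inverse X with hiX
    have XiX : X * iX = 1 := Ring.mul_inverse_cancel X hu
    have iXX : iX * X = 1 := Ring.inverse_mul_cancel X hu
    have c2 : Ti * (1 - B * Q ^ m) = iX * ((1 - B * Q ^ m) * (Ti * X)) := by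
      calc Ti * (1 - B * Q ^ m) = iX * (X * (Ti * (1 - B * Q ^ m))) := by
            rw [← mul_assoc, iXX, one_mul]
        _ = iX * ((1 - B * Q ^ m) * (Ti * X)) := by rw [core m]
    calc (1 - B * Q ^ m) * iX * T
        = (T * Ti) * ((1 - B * Q ^ m) * iX * T) := by rw [hTni, one_mul]
      _ = T * ((Ti * (1 - B * Q ^ m)) * (iX * T)) := by noncomm_ring
      _ = T * ((iX * ((1 - B * Q ^ m) * (Ti * X))) * (iX * T)) := by rw [c2]
      _ = T * (iX * ((1 - B * Q ^ m) * ((Ti * (X * iX)) * T))) := by noncomm_ring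
      _ = T * (iX * ((1 - B * Q ^ m) * (Ti * T))) := by rw [XiX, mul_one]
      _ = T * (iX * (1 - B * Q ^ m)) := by rw [hTin, mul_one]
  -- fix the exponents in the middle product
  have hmid : opr N (fun j => Ring.inverse (1 - C * Q * Q ^ (N + 1 - 2 - j)) *
        (1 - B * Q ^ (N + 1 - 2 - j)))
      = opr N (fun j => Ring.inverse (1 - C * Q ^ (N - j)) * (1 - B * Q ^ (N - (j + 1)))) := by
    apply opr_congr
    intro j hj
    have e : N + 1 - 2 - j = N - (j + 1) := by omega
    have e2 : C * Q * Q ^ (N - (j + 1)) = C * Q ^ (N - j) := by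
      rw [mul_assoc, ← pow_succ']
      congr 2
      omega
    rw [e, e2]
  rw [hmid]
  -- regroup via the shift lemma
  have hshift : (1 - B * Q ^ N) *
      opr N (fun j => Ring.inverse (1 - C * Q ^ (N - j)) * (1 - B * Q ^ (N - (j + 1)))) =
      opr N (fun j => (1 - B * Q ^ (N - j)) * Ring.inverse (1 - C * Q ^ (N - j))) *
        (1 - B * Q ^ (N - N)) :=
    opr_shift N (fun j => 1 - B * Q ^ (N - j)) (fun j => Ring.inverse (1 - C * Q ^ (N - j)))
  -- rewrite the suffix
  have hsufT : iC1 * (1 - A) * iA * C = Ring.inverse (1 - C * Q ^ 0) * T := by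
    have h5 : (1 - A) * iA = iA - 1 := by rw [sub_mul, one_mul, F1]
    have h6 : (1 - C * Q ^ 0 : R) = 1 - C := by rw [pow_zero, mul_one]
    rw [h6, ← hiC1, hT, hB]
    calc iC1 * (1 - A) * iA * C = iC1 * (((1 - A) * iA) * C) := by noncomm_ring
      _ = iC1 * ((iA - 1) * C) := by rw [h5]
      _ = iC1 * (iA * C - C) := by noncomm_ring
  have conj := opr_conj (N + 1)
    (fun j => (1 - B * Q ^ (N - j)) * Ring.inverse (1 - C * Q ^ (N - j)))
    (fun j => Ring.inverse (1 - C * Q ^ (N - j)) * (1 - B * Q ^ (N - j)))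
    T Ti hTin hTni
    (fun j hj => tw (N - j) (hCm (N - j) (by omega)))
  calc Ti * (1 - B * Q ^ N) *
        opr N (fun j => Ring.inverse (1 - C * Q ^ (N - j)) * (1 - B * Q ^ (N - (j + 1)))) *
        (iC1 * (1 - A) * iA * C)
      = Ti * ((1 - B * Q ^ N) *
          opr N (fun j => Ring.inverse (1 - C * Q ^ (N - j)) * (1 - B * Q ^ (N - (j + 1))))) *
          (Ring.inverse (1 - C * Q ^ 0) * T) := by rw [hsufT]; noncomm_ring
    _ = Ti * (opr N (fun j => (1 - B * Q ^ (N - j)) * Ring.inverse (1 - C * Q ^ (N - j))) *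
          (1 - B * Q ^ (N - N))) * (Ring.inverse (1 - C * Q ^ 0) * T) := by rw [hshift]
    _ = Ti * (opr N (fun j => (1 - B * Q ^ (N - j)) * Ring.inverse (1 - C * Q ^ (N - j))) *
          ((1 - B * Q ^ (N - N)) * Ring.inverse (1 - C * Q ^ (N - N)))) * T := by
          rw [Nat.sub_self]; noncomm_ring
    _ = Ti * opr (N + 1) (fun j => (1 - B * Q ^ (N - j)) * Ring.inverse (1 - C * Q ^ (N - j)))
          * T := by simp only [opr_succ, Nat.sub_self]
    _ = opr (N + 1) (fun j => Ring.inverse (1 - C * Q ^ (N - j)) * (1 - B * Q ^ (N - j))) := conj
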